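/- Let u be a real number with 0 < u < arccosh(3/2). Then S_E(u) is purely imaginary with positive imaginary part; that is, Re S_E(u) = 0 and Im S_E(u) = 2·Im Li₂(e^{−u−φ(u)}) + u·(Im φ(u) + 2π) > 0. Consequently, for every positive integer p, with ξ := u + 2pπi and σ₀ := (φ(u) + 2πi)/ξ, one has Re F(σ₀) = 2pπ·Im S_E(u)/|ξ|² > 0. (This is the content of the lemma that 0 < Re F(σ₀), used to identify the exponential growth rate.) -/

import Mathlib

open Complex MeasureTheory

/-- Inverse hyperbolic cosine. -/
noncomputable def arccosh (x : ℝ) : ℝ := Real.log (x + Real.sqrt (x ^ 2 - 1))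

/-- ξ = u + 2pπi -/
noncomputable def xiC (u : ℝ) (p : ℕ) : ℂ := (u : ℂ) + 2 * p * Real.pi * Complex.I

/-- The dilogarithm. -/
noncomputable def Li2 (z : ℂ) : ℂ := -∫ t in (0:ℝ)..1, Complex.log (1 - t * z) / t

/-- φ(u). -/
noncomputable def phiu (u : ℝ) : ℂ :=
  Complex.log ((Real.cosh u : ℂ) - 1/2 -
    (Complex.I / 2) * (Real.sqrt ((2 * Real.cosh u + 1) * (3 - 2 * Real.cosh u)) : ℂ))

/-- The potential function F. -/
noncomputable def Ffun (u : ℝ) (p : ℕ) (z : ℂ) : ℂ :=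
  (1 / xiC u p) * Li2 (Complex.exp (-(xiC u p) * (1 + z))) -
  (1 / xiC u p) * Li2 (Complex.exp (-(xiC u p) * (1 - z))) +
  (u : ℂ) * z - 2 * Real.pi * Complex.I

/-- S_E(u). -/
noncomputable def SE (u : ℝ) : ℂ :=
  Li2 (Complex.exp (-(u:ℂ) - phiu u)) - Li2 (Complex.exp (-(u:ℂ) + phiu u)) +
    (u : ℂ) * (phiu u + 2 * Real.pi * Complex.I)

/-!
When `cosh u ≤ 3/2`, `φ(u)` is the principal logarithm of a point of the unit circle, hence purely
imaginary. Then `e^{-u+φ}` is the conjugate of `A := e^{-u-φ}`, and since `Li₂` commutes with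
conjugation off `(1, ∞)`, `S_E(u) = 2i·Im Li₂(A) + u(φ(u) + 2πi)` is purely imaginary. Its imaginary
part is positive because `Im φ(u) > -π` and `Im Li₂(A) ≥ 0`, the latter since `Im A ≥ 0`.
By `2πi`-periodicity, `e^{-ξ(1 ± σ₀)} = e^{-u ∓ φ(u)}`, so `F(σ₀) = S_E(u)/ξ - 2πi`, whose real part
is `Im S_E(u) · Im ξ / |ξ|²`.
-/

open scoped ComplexConjugate

section Dilogarithm

variable {z : ℂ}

lemma re_one_sub_ofReal_mul_nonneg (hz : z.re ≤ 1) {t : ℝ} (ht₀ : 0 ≤ t) (ht₁ : t ≤ 1) :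
    0 ≤ (1 - (t : ℂ) * z).re := by
  simp only [sub_re, one_re, re_ofReal_mul]
  nlinarith [mul_nonneg ht₀ (sub_nonneg.2 hz)]

lemma arg_one_sub_ofReal_mul_ne_pi (hz : z.re ≤ 1) {t : ℝ} (ht₀ : 0 ≤ t) (ht₁ : t ≤ 1) :
    (1 - (t : ℂ) * z).arg ≠ Real.pi := fun h ↦
  (arg_eq_pi_iff.1 h).1.not_ge (re_one_sub_ofReal_mul_nonneg hz ht₀ ht₁)

lemma Li2_conj (hz : z.re ≤ 1) : Li2 (conj z) = conj (Li2 z) := by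
  rw [Li2, Li2, map_neg, ← intervalIntegral.intervalIntegral_conj]
  congr 1
  refine intervalIntegral.integral_congr fun t ht ↦ ?_
  rw [Set.uIcc_of_le zero_le_one] at ht
  simp only [map_div₀, conj_ofReal,
    ← log_conj _ (arg_one_sub_ofReal_mul_ne_pi hz ht.1 ht.2), map_sub, map_one, map_mul]

/-- In the closed upper half-plane, `log (1 - t z)` lies in the closed lower half-plane. -/
lemma Li2_im_nonneg (hre : z.re ≤ 1) (him : 0 ≤ z.im) : 0 ≤ (Li2 z).im := by
  rw [Li2, neg_im, neg_nonneg]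
  by_cases hint : IntervalIntegrable (fun t : ℝ ↦ log (1 - t * z) / t) volume 0 1
  swap
  · simp [intervalIntegral.integral_undef hint]
  rw [← RCLike.im_eq_complex_im, ← intervalIntegral.intervalIntegral_im hint, ← neg_nonneg,
    ← intervalIntegral.integral_neg]
  refine intervalIntegral.integral_nonneg zero_le_one fun t ⟨ht₀, ht₁⟩ ↦ ?_
  have him_le : (1 - (t : ℂ) * z).im ≤ 0 := by
    simp only [sub_im, one_im, im_ofReal_mul]
    nlinarith
  have harg : (1 - (t : ℂ) * z).arg ≤ 0 := by
    rw [arg_of_re_nonneg (re_one_sub_ofReal_mul_nonneg hre ht₀ ht₁)]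
    exact Real.arcsin_nonpos.2 (div_nonpos_of_nonpos_of_nonneg him_le (norm_nonneg _))
  rw [RCLike.im_eq_complex_im, div_ofReal_im, log_im, neg_nonneg]
  exact div_nonpos_of_nonpos_of_nonneg harg ht₀

end Dilogarithm

lemma cosh_arccosh {x : ℝ} (hx : 1 ≤ x) : Real.cosh (arccosh x) = x := by
  have hs : Real.sqrt (x ^ 2 - 1) ^ 2 = x ^ 2 - 1 := Real.sq_sqrt (by nlinarith)
  have hpos : 0 < x + Real.sqrt (x ^ 2 - 1) := by positivity
  have hinv : (x + Real.sqrt (x ^ 2 - 1))⁻¹ = x - Real.sqrt (x ^ 2 - 1) :=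
    inv_eq_of_mul_eq_one_right (by nlinarith)
  rw [arccosh, Real.cosh_eq, Real.exp_neg, Real.exp_log hpos, hinv]
  ring

section Phi

noncomputable def phiuArg (u : ℝ) : ℂ :=
  (Real.cosh u : ℂ) - 1/2 -
    (I / 2) * (Real.sqrt ((2 * Real.cosh u + 1) * (3 - 2 * Real.cosh u)) : ℂ)

lemma neg_pi_lt_phiu_im (u : ℝ) : -Real.pi < (phiu u).im :=
  neg_pi_lt_log_im _

variable {u : ℝ}

lemma phiu_eq_log : phiu u = log (phiuArg u) := rfl

lemma phiuArg_re : (phiuArg u).re = Real.cosh u - 1 / 2 := by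
  simp [phiuArg]

lemma phiuArg_im :
    (phiuArg u).im = -(Real.sqrt ((2 * Real.cosh u + 1) * (3 - 2 * Real.cosh u)) / 2) := by
  simp [phiuArg, div_eq_inv_mul]

lemma norm_phiuArg (hc : Real.cosh u ≤ 3 / 2) : ‖phiuArg u‖ = 1 := by
  have hs := Real.sq_sqrt
    (mul_nonneg (by linarith [Real.one_le_cosh u]) (by linarith) :
      0 ≤ (2 * Real.cosh u + 1) * (3 - 2 * Real.cosh u))
  rw [norm_def, Real.sqrt_eq_one, normSq_apply, phiuArg_re, phiuArg_im]
  nlinarith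

lemma phiu_re_eq_zero (hc : Real.cosh u ≤ 3 / 2) : (phiu u).re = 0 := by
  rw [phiu_eq_log, log_re, norm_phiuArg hc, Real.log_one]

lemma im_exp_neg_phiu_nonneg (hc : Real.cosh u ≤ 3 / 2) : 0 ≤ (exp (-phiu u)).im := by
  have hne : phiuArg u ≠ 0 := norm_ne_zero_iff.1 (by rw [norm_phiuArg hc]; exact one_ne_zero)
  have him : (phiuArg u).im ≤ 0 := by
    rw [phiuArg_im]
    exact neg_nonpos.2 (by positivity)
  rw [exp_neg, phiu_eq_log, exp_log hne, inv_im, neg_div]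
  exact neg_nonneg.2 (div_nonpos_of_nonpos_of_nonneg him (normSq_nonneg _))

end Phi

lemma conj_exp_neg_ofReal_sub {a : ℝ} {w : ℂ} (hw : w.re = 0) :
    conj (exp (-(a : ℂ) - w)) = exp (-(a : ℂ) + w) := by
  rw [← exp_conj]
  congr 1
  apply Complex.ext <;> simp [hw]

section SE

variable {u : ℝ}

lemma re_exp_neg_sub_phiu_le_one (hu : 0 ≤ u) (hc : Real.cosh u ≤ 3 / 2) :
    (exp (-(u : ℂ) - phiu u)).re ≤ 1 := by
  refine (re_le_norm _).trans ?_
  rw [norm_exp, Real.exp_le_one_iff]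
  simp [phiu_re_eq_zero hc, hu]

/-- Since `φ(u)` is purely imaginary, the two dilogarithms in `S_E(u)` are complex conjugate. -/
lemma SE_eq_sub_conj (hu : 0 ≤ u) (hc : Real.cosh u ≤ 3 / 2) :
    SE u = Li2 (exp (-(u : ℂ) - phiu u)) - conj (Li2 (exp (-(u : ℂ) - phiu u))) +
      u * (phiu u + 2 * Real.pi * I) := by
  rw [SE, ← Li2_conj (re_exp_neg_sub_phiu_le_one hu hc),
    conj_exp_neg_ofReal_sub (phiu_re_eq_zero hc)]

lemma Li2_exp_neg_sub_phiu_im_nonneg (hu : 0 ≤ u) (hc : Real.cosh u ≤ 3 / 2) :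
    0 ≤ (Li2 (exp (-(u : ℂ) - phiu u))).im := by
  refine Li2_im_nonneg (re_exp_neg_sub_phiu_le_one hu hc) ?_
  rw [sub_eq_add_neg, exp_add, ← ofReal_neg, ← ofReal_exp, im_ofReal_mul]
  exact mul_nonneg (Real.exp_pos _).le (im_exp_neg_phiu_nonneg hc)

end SE

lemma exp_neg_xiC_mul_one_add (u : ℝ) (p : ℕ) (hξ : xiC u p ≠ 0) :
    exp (-xiC u p * (1 + (phiu u + 2 * Real.pi * I) / xiC u p)) = exp (-(u : ℂ) - phiu u) :=
  exp_eq_exp_iff_exists_int.2 ⟨-(p + 1), by field_simp; simp only [xiC]; push_cast; ring⟩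

lemma exp_neg_xiC_mul_one_sub (u : ℝ) (p : ℕ) (hξ : xiC u p ≠ 0) :
    exp (-xiC u p * (1 - (phiu u + 2 * Real.pi * I) / xiC u p)) = exp (-(u : ℂ) + phiu u) :=
  exp_eq_exp_iff_exists_int.2 ⟨1 - p, by field_simp; simp only [xiC]; push_cast; ring⟩

lemma Ffun_sigma0 (u : ℝ) (p : ℕ) (hξ : xiC u p ≠ 0) :
    Ffun u p ((phiu u + 2 * Real.pi * I) / xiC u p) = SE u / xiC u p - 2 * Real.pi * I := by
  rw [Ffun, exp_neg_xiC_mul_one_add u p hξ, exp_neg_xiC_mul_one_sub u p hξ, SE]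
  field_simp

lemma re_div_xiC_sub_of_re_eq_zero {S : ℂ} (hS : S.re = 0) (u : ℝ) (p : ℕ) :
    (S / xiC u p - 2 * Real.pi * I).re = 2 * p * Real.pi * S.im / ‖xiC u p‖ ^ 2 := by
  rw [sub_re, div_re, hS, Complex.sq_norm]
  simp [xiC, field]

/-- Lemma: `S_E(u)` is purely imaginary with positive imaginary part, and consequently
`Re F(σ₀) = 2pπ·Im S_E(u)/|ξ|² > 0`. -/
theorem SE_purely_imaginary_pos (u : ℝ) (hu0 : 0 < u) (hu1 : u < arccosh (3/2)) :
    (SE u).re = 0 ∧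
    (SE u).im = 2 * (Li2 (Complex.exp (-(u : ℂ) - phiu u))).im +
      u * ((phiu u).im + 2 * Real.pi) ∧
    0 < (SE u).im ∧
    ∀ p : ℕ, 0 < p →
      (Ffun u p ((phiu u + 2 * Real.pi * Complex.I) / xiC u p)).re =
        2 * p * Real.pi * (SE u).im / ‖xiC u p‖ ^ 2 ∧
      0 < (Ffun u p ((phiu u + 2 * Real.pi * Complex.I) / xiC u p)).re := by
  have hc : Real.cosh u ≤ 3 / 2 := by
    rw [← cosh_arccosh (by norm_num : (1 : ℝ) ≤ 3 / 2), Real.cosh_le_cosh,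
      abs_of_pos hu0, abs_of_pos (hu0.trans hu1)]
    exact hu1.le
  have hSE := SE_eq_sub_conj hu0.le hc
  have hφ := phiu_re_eq_zero hc
  have hSE_re : (SE u).re = 0 := by simp [hSE, hφ]
  have hSE_im : (SE u).im = 2 * (Li2 (exp (-(u : ℂ) - phiu u))).im +
      u * ((phiu u).im + 2 * Real.pi) := by
    simp [hSE, hφ, two_mul]
  have hSE_pos : 0 < (SE u).im := by
    have hφ_im : 0 < (phiu u).im + 2 * Real.pi := by
      linarith [neg_pi_lt_phiu_im u, Real.pi_pos]
    rw [hSE_im]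
    exact add_pos_of_nonneg_of_pos
      (mul_nonneg zero_le_two (Li2_exp_neg_sub_phiu_im_nonneg hu0.le hc)) (mul_pos hu0 hφ_im)
  refine ⟨hSE_re, hSE_im, hSE_pos, fun p hp ↦ ?_⟩
  have hξ : xiC u p ≠ 0 := fun h ↦ hu0.ne' (by simpa [xiC] using congrArg re h)
  have hF := (Ffun_sigma0 u p hξ).symm ▸ re_div_xiC_sub_of_re_eq_zero hSE_re u p
  refine ⟨hF, hF ▸ ?_⟩
  have hξ_norm : 0 < ‖xiC u p‖ := norm_pos_iff.2 hξ
  positivity
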